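/- arXiv:math-ph/0404015 — 3 statements merged into one kernel-verified Lean document; each statement's English description precedes it below -/
import Mathlib

section
/- Let f be analytic near E₀ with f'(E₀) = ⋯ = f^{(k−1)}(E₀) = 0, f^{(k)}(E₀) = a ≠ 0, k ≥ 2, and f(E₀) ∈ ℝ. Then for each j ∈ {1, …, 2k}, there are points E arbitrarily close to E₀ with E ≠ E₀, f(E) ∈ ℝ, and arg(E − E₀) arbitrarily close to (jπ − arg a)/k. In particular, the level set {E : f(E) ∈ ℝ} near E₀ contains points in at least 2k distinct directions from E₀. -/
open Real

open Complex Filter Metric Set Topology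

/-!
Write `f z = f E₀ + (z - E₀) ^ k * h z` with `h` analytic and `h E₀ = a / k!`. On a small circle
`z = E₀ + r e^{iθ}` this gives `Im f z = r ^ k * Im (e^{ikθ} h z)`, with `h z` close to `h E₀`.
At the angles `θ = (jπ - arg a ± φ₀) / k` the main term `e^{ikθ} h E₀ = (-1)^j ‖h E₀‖ e^{±iφ₀}`
has imaginary parts of opposite signs which dominate the error, so by the intermediate value
theorem `Im f` vanishes on the arc between them.
-/

section Factorization

variable {𝕜 : Type*} [NontriviallyNormedField 𝕜] [CompleteSpace 𝕜] [CharZero 𝕜]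
  {f : 𝕜 → 𝕜} {z₀ : 𝕜}

theorem AnalyticAt.iterate_dslope_apply_self (hf : AnalyticAt 𝕜 f z₀) (n : ℕ) :
    (Function.swap dslope z₀)^[n] f z₀ = iteratedDeriv n f z₀ / n.factorial := by
  rw [← (hf.hasFPowerSeriesAt.has_fpower_series_iterate_dslope_fslope n).coeff_zero 1,
    ← FormalMultilinearSeries.coeff, FormalMultilinearSeries.coeff_iterate_fslope, zero_add,
    FormalMultilinearSeries.coeff_ofScalars]

theorem AnalyticAt.exists_eq_add_pow_mul (hf : AnalyticAt 𝕜 f z₀) {k : ℕ} (hk : k ≠ 0)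
    (hder : ∀ i, 0 < i → i < k → iteratedDeriv i f z₀ = 0) :
    ∃ h : 𝕜 → 𝕜, AnalyticAt 𝕜 h z₀ ∧ h z₀ = iteratedDeriv k f z₀ / k.factorial ∧
      ∀ z, f z = f z₀ + (z - z₀) ^ k * h z := by
  set g : 𝕜 → 𝕜 := fun z ↦ f z - f z₀
  have hg : AnalyticAt 𝕜 g z₀ := hf.sub analyticAt_const
  have hgf : ∀ i, 0 < i → iteratedDeriv i g z₀ = iteratedDeriv i f z₀ := fun i hi ↦ by
    rw [iteratedDeriv_fun_sub hf.contDiffAt contDiffAt_const, iteratedDeriv_const,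
      if_neg hi.ne', sub_zero]
  refine ⟨(Function.swap dslope z₀)^[k] g,
    (hg.hasFPowerSeriesAt.has_fpower_series_iterate_dslope_fslope k).analyticAt, ?_, fun z ↦ ?_⟩
  · rw [hg.iterate_dslope_apply_self, hgf k (Nat.pos_of_ne_zero hk)]
  · have hvanish : ∀ i < k, (Function.swap dslope z₀)^[i] g z₀ = 0 := fun i hi ↦ by
      rcases Nat.eq_zero_or_pos i with rfl | hi0
      · simp [g]
      · rw [hg.iterate_dslope_apply_self, hgf i hi0, hder i hi0 hi, zero_div]
    rw [← smul_eq_mul, pow_sub_smul_iterate_dslope_of_zero k hvanish z]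
    ring

end Factorization

theorem abs_im_exp_mul_sub_norm_mul_sin_le (c w : ℂ) (φ : ℝ) :
    |(exp ((φ - arg c : ℝ) * I) * w).im - ‖c‖ * Real.sin φ| ≤ ‖w - c‖ := by
  have hrot : exp ((φ - arg c : ℝ) * I) * c = ‖c‖ * exp (φ * I) := by
    calc exp ((φ - arg c : ℝ) * I) * c
        = exp ((φ - arg c : ℝ) * I) * (‖c‖ * exp (arg c * I)) := by rw [norm_mul_exp_arg_mul_I]
      _ = ‖c‖ * exp ((φ - arg c : ℝ) * I + arg c * I) := by rw [Complex.exp_add]; ring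
      _ = ‖c‖ * exp (φ * I) := by push_cast; ring_nf
  have him : (exp ((φ - arg c : ℝ) * I) * c).im = ‖c‖ * Real.sin φ := by
    rw [hrot, im_ofReal_mul, exp_ofReal_mul_I_im]
  calc |(exp ((φ - arg c : ℝ) * I) * w).im - ‖c‖ * Real.sin φ|
      = |(exp ((φ - arg c : ℝ) * I) * (w - c)).im| := by rw [mul_sub, sub_im, him]
    _ ≤ ‖exp ((φ - arg c : ℝ) * I) * (w - c)‖ := abs_im_le_norm _
    _ = ‖w - c‖ := by rw [norm_mul, norm_exp_ofReal_mul_I, one_mul]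

theorem circleMap_sub_center_pow (z₀ : ℂ) (r ψ : ℝ) (j : ℕ) {k : ℕ} (hk : k ≠ 0) :
    (circleMap z₀ r ((j * π + ψ) / k) - z₀) ^ k = ((-1) ^ j * r ^ k : ℝ) * exp (ψ * I) := by
  rw [circleMap_sub_center, circleMap, zero_add, mul_pow, ← Complex.exp_nat_mul]
  have : (k : ℂ) * (((j * π + ψ) / k : ℝ) * I) = j * (π * I) + ψ * I := by
    push_cast
    field_simp
  rw [this, Complex.exp_add, Complex.exp_nat_mul, exp_pi_mul_I]
  push_cast
  ring

theorem exists_arg_circleMap_sub_center_sub_eq (z₀ : ℂ) {r : ℝ} (hr : 0 < r) (θ : ℝ) :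
    ∃ m : ℤ, arg (circleMap z₀ r θ - z₀) - 2 * π * m = θ :=
  ⟨-toIocDiv two_pi_pos (-π) θ, by
    rw [circleMap_sub_center, circleMap, zero_add, arg_real_mul _ hr, arg_exp_mul_I, toIocMod,
      zsmul_eq_mul]
    push_cast
    ring⟩

theorem zero_mem_uIcc_of_mul_nonpos {a b : ℝ} (h : a * b ≤ 0) : (0 : ℝ) ∈ uIcc a b := by
  rw [mem_uIcc]
  rcases le_total a 0 with ha | ha
  · rcases le_or_gt 0 b with hb | hb
    · exact Or.inl ⟨ha, hb⟩
    · exact Or.inr ⟨hb.le, by nlinarith⟩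
  · rcases le_or_gt b 0 with hb | hb
    · exact Or.inr ⟨hb, ha⟩
    · exact Or.inl ⟨by nlinarith, hb.le⟩

theorem Filter.Eventually.exists_forall_sphere {X : Type*} [PseudoMetricSpace X] {x₀ : X}
    {P : X → Prop} (hP : ∀ᶠ x in 𝓝 x₀, P x) {ε : ℝ} (hε : 0 < ε) :
    ∃ r ∈ Ioo 0 ε, ∀ x ∈ sphere x₀ r, P x := by
  obtain ⟨ρ, hρ, hball⟩ := Metric.eventually_nhds_iff_ball.mp hP
  refine ⟨min ε ρ / 2, ⟨by positivity, by linarith [min_le_left ε ρ]⟩, fun x hx ↦ hball x ?_⟩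
  rw [mem_ball, mem_sphere.mp hx]
  linarith [min_le_right ε ρ]

theorem exists_im_eq_zero_on_arc {f h : ℂ → ℂ} {z₀ : ℂ} {k : ℕ} (hk : k ≠ 0)
    (hfh : ∀ z, f z = f z₀ + (z - z₀) ^ k * h z) (hreal : (f z₀).im = 0) (j : ℕ) {r φ₀ : ℝ}
    (hr : 0 ≤ r) (hcont : ∀ z ∈ sphere z₀ r, ContinuousAt h z)
    (hclose : ∀ z ∈ sphere z₀ r, dist (h z) (h z₀) < ‖h z₀‖ * Real.sin φ₀) :
    ∃ φ ∈ uIcc (-φ₀) φ₀, (f (circleMap z₀ r ((j * π + (φ - arg (h z₀))) / k))).im = 0 := by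
  set c := h z₀
  set z : ℝ → ℂ := fun φ ↦ circleMap z₀ r ((j * π + (φ - arg c)) / k)
  set X : ℝ → ℝ := fun φ ↦ (exp ((φ - arg c : ℝ) * I) * h (z φ)).im
  have hmem : ∀ φ, z φ ∈ sphere z₀ r := fun φ ↦ circleMap_mem_sphere z₀ hr _
  have himf : ∀ φ, (f (z φ)).im = (-1) ^ j * r ^ k * X φ := fun φ ↦ by
    rw [hfh, add_im, hreal, zero_add, circleMap_sub_center_pow z₀ r _ j hk, mul_assoc,
      im_ofReal_mul]
  have hX_bound : ∀ φ, |X φ - ‖c‖ * Real.sin φ| < ‖c‖ * Real.sin φ₀ := fun φ ↦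
    (abs_im_exp_mul_sub_norm_mul_sin_le c _ φ).trans_lt
      (dist_eq_norm (h (z φ)) c ▸ hclose _ (hmem φ))
  have hX_neg : X (-φ₀) < 0 := by
    have := (abs_lt.mp (hX_bound (-φ₀))).2
    rw [Real.sin_neg] at this
    linarith
  have hX_pos : 0 < X φ₀ := by linarith [(abs_lt.mp (hX_bound φ₀)).1]
  have hcontOn : ContinuousOn (fun φ ↦ (f (z φ)).im) (uIcc (-φ₀) φ₀) := by
    intro φ _
    simp only [hfh (z _)]
    have hzc : Continuous z := by fun_prop
    exact (continuous_im.continuousAt.comp (continuousAt_const.add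
      (((hzc.sub continuous_const).pow k).continuousAt.mul
        ((hcont _ (hmem φ)).comp hzc.continuousAt)))).continuousWithinAt
  have hsign : (f (z (-φ₀))).im * (f (z φ₀)).im ≤ 0 := by
    calc (f (z (-φ₀))).im * (f (z φ₀)).im = ((-1) ^ j * r ^ k) ^ 2 * (X (-φ₀) * X φ₀) := by
          rw [himf, himf]; ring
      _ ≤ 0 := mul_nonpos_of_nonneg_of_nonpos (sq_nonneg _)
          (mul_neg_of_neg_of_pos hX_neg hX_pos).le
  exact intermediate_value_uIcc hcontOn (zero_mem_uIcc_of_mul_nonpos hsign)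

theorem exists_im_eq_zero_on_small_arc {f h : ℂ → ℂ} {z₀ : ℂ} {k : ℕ} (hk : k ≠ 0)
    (hfh : ∀ z, f z = f z₀ + (z - z₀) ^ k * h z) (hreal : (f z₀).im = 0)
    (hh : ∀ᶠ z in 𝓝 z₀, ContinuousAt h z) (hc : h z₀ ≠ 0) (j : ℕ) {ε φ₀ : ℝ} (hε : 0 < ε)
    (hφ₀ : 0 < φ₀) (hφ₀π : φ₀ < π) :
    ∃ r ∈ Ioo 0 ε, ∃ φ, |φ| ≤ φ₀ ∧
      (f (circleMap z₀ r ((j * π + (φ - arg (h z₀))) / k))).im = 0 := by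
  have hsin : 0 < ‖h z₀‖ * Real.sin φ₀ :=
    mul_pos (norm_pos_iff.mpr hc) (sin_pos_of_pos_of_lt_pi hφ₀ hφ₀π)
  obtain ⟨r, hr, hsphere⟩ :=
    (hh.and (hh.self_of_nhds.eventually (ball_mem_nhds _ hsin))).exists_forall_sphere hε
  obtain ⟨φ, hφ, hzero⟩ := exists_im_eq_zero_on_arc hk hfh hreal j hr.1.le
    (fun z hz ↦ (hsphere z hz).1) (fun z hz ↦ (hsphere z hz).2)
  rw [uIcc_of_le (by linarith)] at hφ
  exact ⟨r, hr, φ, abs_le.mpr hφ, hzero⟩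

/-- Existence part of the 2k-arc structure: for each of the 2k directions
(jπ − arg a)/k there are points E arbitrarily close to E₀ with f(E) real and
arg(E − E₀) arbitrarily close (mod 2π) to that direction. -/
theorem stmt_12 (f : ℂ → ℂ) (E₀ : ℂ) (k : ℕ) (hk : 2 ≤ k) (a : ℂ) (ha : a ≠ 0)
    (hf : AnalyticAt ℂ f E₀) (hreal : (f E₀).im = 0)
    (hder : ∀ j : ℕ, 1 ≤ j → j ≤ k - 1 → iteratedDeriv j f E₀ = 0)
    (hka : iteratedDeriv k f E₀ = a) :
    ∀ j ∈ Finset.Icc 1 (2 * k), ∀ ε > (0 : ℝ), ∀ δ > (0 : ℝ),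
      ∃ E : ℂ, E ≠ E₀ ∧ ‖E - E₀‖ < ε ∧ (f E).im = 0 ∧
        ∃ m : ℤ,
          |Complex.arg (E - E₀) - ((j : ℝ) * π - Complex.arg a) / k - 2 * π * m| < δ := by
  intro j _ ε hε δ hδ
  have hk0 : k ≠ 0 := by omega
  have hkpos : (0 : ℝ) < k := by positivity
  obtain ⟨h, hh, hval, hfh⟩ := hf.exists_eq_add_pow_mul hk0 fun i hi hik ↦ hder i hi (by omega)
  rw [hka] at hval
  have hc : h E₀ ≠ 0 := hval ▸ div_ne_zero ha (Nat.cast_ne_zero.mpr k.factorial_ne_zero)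
  have harg : arg (h E₀) = arg a := by
    rw [hval, div_eq_mul_inv, ← ofReal_natCast, ← ofReal_inv, arg_mul_real (by positivity)]
  obtain ⟨r, ⟨hr, hrε⟩, φ, hφ, hzero⟩ := exists_im_eq_zero_on_small_arc hk0 hfh hreal
    (hh.eventually_analyticAt.mono fun _ hz ↦ hz.continuousAt) hc j hε
    (φ₀ := min (k * δ / 2) (π / 2)) (by positivity)
    ((min_le_right _ _).trans_lt (by linarith [pi_pos]))
  set θ := (j * π + (φ - arg (h E₀))) / k
  obtain ⟨m, hm⟩ := exists_arg_circleMap_sub_center_sub_eq E₀ hr θ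
  refine ⟨circleMap E₀ r θ, circleMap_ne_center hr.ne', ?_, hzero, m, ?_⟩
  · rwa [circleMap_sub_center, norm_circleMap_zero, abs_of_pos hr]
  have hθ : θ - (j * π - arg a) / k = φ / k := by
    simp only [θ, harg]
    field_simp
    ring
  calc |arg (circleMap E₀ r θ - E₀) - (j * π - arg a) / k - 2 * π * m|
      = |φ| / k := by rw [sub_right_comm, hm, hθ, abs_div, abs_of_pos hkpos]
    _ ≤ (k * δ / 2) / k := by gcongr; exact hφ.trans (min_le_left _ _)
    _ < δ := by field_simp; linarith
end

section
/- Let f : ℂ → ℂ be entire with f(conj z) = conj(f z), and suppose f restricted to ℝ has a strict local maximum or strict local minimum at E₀ ∈ ℝ with −1 < f(E₀) < 1, and suppose f is nonconstant of order less than 1. Then there exist nonreal E ∈ ℂ with f(E) real and −1 < f(E) < 1. -/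
/-!
At a strict local extremum `x₀` of `f` on `ℝ` the function is not locally constant, so by the
open mapping theorem `f` maps every small disc around `x₀` onto a neighbourhood of `f x₀`, which is
real by the Schwarz symmetry. Hence every real value `f x₀ + t`, with `t` small and on the far side
of the extremum, is attained in the disc; on the real segment `f` stays on the near side of
`f x₀`, so it is attained at a nonreal point.
-/

open Complex ComplexConjugate Filter Topology

theorem eventually_nhdsNE_of_forall_abs_sub_lt {p : ℝ → Prop} {a : ℝ}
    (h : ∃ ε > 0, ∀ x, x ≠ a → |x - a| < ε → p x) : ∀ᶠ x in 𝓝[≠] a, p x := by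
  obtain ⟨ε, hε, hp⟩ := h
  rw [eventually_nhdsWithin_iff, Metric.eventually_nhds_iff]
  exact ⟨ε, hε, fun x hx hne => hp x hne (Real.dist_eq x a ▸ hx)⟩

theorem im_apply_ofReal_eq_zero {f : ℂ → ℂ} (hsym : ∀ z, f (conj z) = conj (f z)) (x : ℝ) :
    (f x).im = 0 :=
  conj_eq_iff_im.mp (by rw [← hsym, conj_ofReal])

namespace AnalyticAt

variable {f : ℂ → ℂ} {x₀ : ℝ}

theorem eventually_exists_nonreal_eq_add_of_strictMax_re (hf : AnalyticAt ℂ f x₀)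
    (hmax : ∀ᶠ x : ℝ in 𝓝[≠] x₀, (f x).re < (f x₀).re) :
    ∀ᶠ t : ℝ in 𝓝[>] 0, ∃ z : ℂ, z.im ≠ 0 ∧ f z = f x₀ + t := by
  obtain hconst | hopen := hf.eventually_constant_or_nhds_le_map_nhds
  · have hconst' : ∀ᶠ x : ℝ in 𝓝[≠] x₀, f x = f x₀ :=
      nhdsWithin_le_nhds ((continuous_ofReal.tendsto x₀).eventually hconst)
    obtain ⟨x, hlt, heq⟩ := (hmax.and hconst').exists
    exact absurd hlt (by rw [heq]; exact lt_irrefl _)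
  have hnear : ∀ᶠ z : ℂ in 𝓝 (x₀ : ℂ), z.re ≠ x₀ → (f z.re).re < (f x₀).re := by
    have := (continuous_re.tendsto (x₀ : ℂ)).eventually (eventually_nhdsWithin_iff.mp hmax)
    simpa only [ofReal_re, Set.mem_compl_singleton_iff] using this
  have himage : ∀ᶠ t : ℝ in 𝓝 0, f x₀ + t ∈ f '' {z | z.re ≠ x₀ → (f z.re).re < (f x₀).re} := by
    refine Tendsto.eventually (f := fun t : ℝ => f x₀ + t) ?_ (hopen (image_mem_map hnear))
    exact ((continuous_const_add _).comp continuous_ofReal).tendsto' 0 _ (by simp)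
  filter_upwards [self_mem_nhdsWithin, nhdsWithin_le_nhds himage] with t (ht : 0 < t) hz
  obtain ⟨z, hz, hfz⟩ := hz
  refine ⟨z, fun him => ?_, hfz⟩
  have hre : f z.re = f x₀ + t := by
    rwa [← re_add_im z, him, ofReal_zero, zero_mul, add_zero] at hfz
  have hne : z.re ≠ x₀ := fun h => ht.ne' (by simpa [h] using hre)
  have := hz hne
  rw [hre, add_re, ofReal_re] at this
  linarith

theorem eventually_exists_nonreal_eq_add_of_strictMin_re (hf : AnalyticAt ℂ f x₀)
    (hmin : ∀ᶠ x : ℝ in 𝓝[≠] x₀, (f x₀).re < (f x).re) :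
    ∀ᶠ t : ℝ in 𝓝[<] 0, ∃ z : ℂ, z.im ≠ 0 ∧ f z = f x₀ + t := by
  have hneg := hf.neg.eventually_exists_nonreal_eq_add_of_strictMax_re
    (hmin.mono fun x hx => by simpa only [Pi.neg_apply, neg_re, neg_lt_neg_iff] using hx)
  have hflip : Tendsto Neg.neg (𝓝[<] (0 : ℝ)) (𝓝[>] 0) := by
    simpa using tendsto_neg_nhdsLT (H := ℝ) (a := 0)
  filter_upwards [hflip.eventually hneg] with t ⟨z, hz, hfz⟩
  refine ⟨z, hz, ?_⟩
  simp only [Pi.neg_apply, ofReal_neg] at hfz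
  linear_combination -hfz

end AnalyticAt

theorem stmt_13_general (f : ℂ → ℂ) (hf : Differentiable ℂ f)
    (hsym : ∀ z : ℂ, f (starRingEnd ℂ z) = starRingEnd ℂ (f z))
    (E₀ : ℝ)
    (hext : (∃ ε > (0 : ℝ), ∀ x : ℝ, x ≠ E₀ → |x - E₀| < ε →
              (f (x : ℂ)).re < (f (E₀ : ℂ)).re) ∨
            (∃ ε > (0 : ℝ), ∀ x : ℝ, x ≠ E₀ → |x - E₀| < ε →
              (f (E₀ : ℂ)).re < (f (x : ℂ)).re))
    (hlo : -1 < (f (E₀ : ℂ)).re) (hhi : (f (E₀ : ℂ)).re < 1) :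
    ∃ E : ℂ, E.im ≠ 0 ∧ (f E).im = 0 ∧ -1 < (f E).re ∧ (f E).re < 1 := by
  have hshift : ∃ᶠ t : ℝ in 𝓝 0, ∃ z : ℂ, z.im ≠ 0 ∧ f z = f E₀ + t := by
    rcases hext with hmax | hmin
    · exact ((hf.analyticAt _).eventually_exists_nonreal_eq_add_of_strictMax_re
        (eventually_nhdsNE_of_forall_abs_sub_lt hmax)).frequently.filter_mono nhdsWithin_le_nhds
    · exact ((hf.analyticAt _).eventually_exists_nonreal_eq_add_of_strictMin_re
        (eventually_nhdsNE_of_forall_abs_sub_lt hmin)).frequently.filter_mono nhdsWithin_le_nhds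
  have hsmall : ∀ᶠ t : ℝ in 𝓝 0, (f E₀).re + t ∈ Set.Ioo (-1) 1 :=
    ((continuous_const_add _).tendsto' 0 _ (add_zero _)).eventually (Ioo_mem_nhds hlo hhi)
  obtain ⟨t, ⟨E, hE, hfE⟩, hlo', hhi'⟩ := (hshift.and_eventually hsmall).exists
  refine ⟨E, hE, ?_, ?_, ?_⟩ <;> simp [hfE, im_apply_ofReal_eq_zero hsym, hlo', hhi']

/-- For an entire function f with the Schwarz symmetry f(conj z) = conj(f z),
nonconstant of order less than 1, having a strict local extremum on ℝ at E₀
with −1 < f(E₀) < 1, there exist nonreal E with f(E) real and −1 < f(E) < 1. -/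
theorem stmt_13 (f : ℂ → ℂ) (hf : Differentiable ℂ f)
    (hsym : ∀ z : ℂ, f (starRingEnd ℂ z) = starRingEnd ℂ (f z))
    (hnc : ¬∃ c : ℂ, ∀ z : ℂ, f z = c)
    (horder : ∃ ρ : ℝ, 0 ≤ ρ ∧ ρ < 1 ∧ ∃ C > (0 : ℝ),
      ∀ z : ℂ, ‖f z‖ ≤ C * Real.exp (‖z‖ ^ ρ))
    (E₀ : ℝ)
    (hext : (∃ ε > (0 : ℝ), ∀ x : ℝ, x ≠ E₀ → |x - E₀| < ε →
              (f (x : ℂ)).re < (f (E₀ : ℂ)).re) ∨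
            (∃ ε > (0 : ℝ), ∀ x : ℝ, x ≠ E₀ → |x - E₀| < ε →
              (f (E₀ : ℂ)).re < (f (x : ℂ)).re))
    (hlo : -1 < (f (E₀ : ℂ)).re) (hhi : (f (E₀ : ℂ)).re < 1) :
    ∃ E : ℂ, E.im ≠ 0 ∧ (f E).im = 0 ∧ -1 < (f E).re ∧ (f E).re < 1 :=
  stmt_13_general f hf hsym E₀ hext hlo hhi
end

section
/- Let f be analytic on an open connected set U ⊆ ℂ, nonconstant, and let E₀ ∈ U with f(E₀) ∈ ℝ. Then in every punctured neighborhood of E₀ there exist points E ≠ E₀ with f(E) ∈ ℝ. -/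
/-!
By the identity theorem `f` is not constant near `E₀`, so by the local open mapping theorem
`f` maps every neighbourhood of `E₀` onto a neighbourhood of `f E₀`. Such a neighbourhood
contains the points `f E₀ + r` with `r` small, real and nonzero, and their preimages are points
`E ≠ E₀` close to `E₀` at which `f` is real.
-/

open Filter Topology

theorem AnalyticOnNhd.nhds_le_map_nhds {E : Type*} [NormedAddCommGroup E] [NormedSpace ℂ E]
    {U : Set E} {f : E → ℂ} (hf : AnalyticOnNhd ℂ f U) (hU : IsPreconnected U)
    (hnc : ¬∃ c, ∀ z ∈ U, f z = c) {z₀ : E} (hz₀ : z₀ ∈ U) :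
    𝓝 (f z₀) ≤ map f (𝓝 z₀) :=
  (hf z₀ hz₀).eventually_constant_or_nhds_le_map_nhds.resolve_left fun hconst =>
    hnc ⟨f z₀, hf.eqOn_of_preconnected_of_eventuallyEq analyticOnNhd_const hU hz₀ hconst⟩

theorem frequently_nhdsNE_of_nhds_le_map_nhds {X Y : Type*} [TopologicalSpace X]
    [TopologicalSpace Y] {f : X → Y} {x₀ : X} (hf : 𝓝 (f x₀) ≤ map f (𝓝 x₀)) {p : Y → Prop}
    (hp : ∃ᶠ y in 𝓝[≠] f x₀, p y) : ∃ᶠ x in 𝓝[≠] x₀, p (f x) := by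
  have hmap : ∃ᶠ x in 𝓝 x₀, p (f x) ∧ f x ≠ f x₀ :=
    (frequently_nhdsWithin_iff.mp hp).filter_mono hf
  refine frequently_nhdsWithin_iff.mpr (hmap.mono fun x hx => ⟨hx.1, ?_⟩)
  rintro rfl
  exact hx.2 rfl

theorem Complex.frequently_nhdsNE_im_eq (w : ℂ) : ∃ᶠ z in 𝓝[≠] w, z.im = w.im := by
  have hline : Tendsto (fun r : ℝ => w + r) (𝓝[≠] 0) (𝓝[≠] w) := by
    refine tendsto_nhdsWithin_iff.mpr ⟨?_, ?_⟩
    · have : Continuous fun r : ℝ => w + r := by fun_prop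
      simpa using (this.tendsto 0).mono_left nhdsWithin_le_nhds
    · filter_upwards [self_mem_nhdsWithin] with r hr
      simpa using hr
  exact hline.frequently (Frequently.of_forall fun r => by simp)

/-- The real level set of a nonconstant analytic function on an open connected
set has no isolated points: near any E₀ with f(E₀) real there are other points
where f is real. -/
theorem stmt_18 (U : Set ℂ) (hU : IsOpen U) (hUc : IsConnected U)
    (f : ℂ → ℂ) (hf : AnalyticOnNhd ℂ f U)
    (hnc : ¬∃ c : ℂ, ∀ z ∈ U, f z = c)
    (E₀ : ℂ) (hE₀ : E₀ ∈ U) (hreal : (f E₀).im = 0) :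
    ∀ ε > (0 : ℝ), ∃ E ∈ U, E ≠ E₀ ∧ ‖E - E₀‖ < ε ∧ (f E).im = 0 := by
  intro ε hε
  have hfreq : ∃ᶠ E in 𝓝[≠] E₀, (f E).im = (f E₀).im :=
    frequently_nhdsNE_of_nhds_le_map_nhds (hf.nhds_le_map_nhds hUc.isPreconnected hnc hE₀)
      (Complex.frequently_nhdsNE_im_eq (f E₀))
  have hnear : ∀ᶠ E in 𝓝[≠] E₀, E ∈ U ∧ E ≠ E₀ ∧ ‖E - E₀‖ < ε := by
    filter_upwards [nhdsWithin_le_nhds (hU.mem_nhds hE₀), self_mem_nhdsWithin,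
      nhdsWithin_le_nhds (Metric.ball_mem_nhds E₀ hε)] with E hEU hne hball
    exact ⟨hEU, hne, mem_ball_iff_norm.mp hball⟩
  obtain ⟨E, hEreal, hEU, hne, hdist⟩ := (hfreq.and_eventually hnear).exists
  exact ⟨E, hEU, hne, hdist, hEreal.trans hreal⟩
end
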